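/- Let p : ℝⁿ → ℝ be a continuously differentiable, everywhere positive probability density such that ∫ ‖∇log p(x)‖² p(x) dx < ∞, and let φ : ℝⁿ → ℝ be twice continuously differentiable such that ∇φ has compact support. Then (1/2) ∫ ‖∇log p(x) − ∇φ(x)‖² p(x) dx = (1/2) ∫ ‖∇log p(x)‖² p(x) dx + (1/2) ∫ [ ‖∇φ(x)‖² + 2 (Δφ)(x) ] p(x) dx. In particular, the Fisher divergence between p and the score ∇φ differs from half the score matching objective L_SM(φ) = ∫ [‖∇φ‖² + 2Δφ] p dx by a quantity not depending on φ. -/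

import Mathlib

/-!
Since `p · ∇log p = ∇p`, expanding the square gives pointwise
`‖∇log p − ∇φ‖² p = ‖∇log p‖² p − 2⟪∇p, ∇φ⟫ + ‖∇φ‖² p`.
Integrating the cross term by parts, one coordinate at a time, against the compactly supported
field `∇φ` turns it into `−∫ Δφ · p`; no boundary term appears because `∇φ` vanishes outside a
compact set.
-/

open MeasureTheory
open scoped RealInnerProductSpace

/-- The divergence `div f = Σ_d ∂f_d/∂x_d` of a vector field on `ℝⁿ`. -/
noncomputable def diverg {n : ℕ}
    (f : EuclideanSpace ℝ (Fin n) → EuclideanSpace ℝ (Fin n))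
    (x : EuclideanSpace ℝ (Fin n)) : ℝ :=
  ∑ d : Fin n, fderiv ℝ f x (EuclideanSpace.single d 1) d

/-- The Laplacian `Δφ = Σ_d ∂²φ/∂x_d²`, i.e. the divergence of the gradient. -/
noncomputable def laplacian {n : ℕ}
    (φ : EuclideanSpace ℝ (Fin n) → ℝ) (x : EuclideanSpace ℝ (Fin n)) : ℝ :=
  diverg (fun y => gradient φ y) x

open InnerProductSpace

section Gradient

variable {F : Type*} [NormedAddCommGroup F] [InnerProductSpace ℝ F] [CompleteSpace F]

theorem ContDiff.gradient {f : F → ℝ} {m k : WithTop ℕ∞} (hf : ContDiff ℝ k f)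
    (hmk : m + 1 ≤ k) : ContDiff ℝ m (gradient f) :=
  (toDual ℝ F).symm.contDiff.comp (hf.fderiv_right hmk)

theorem gradient_log_eq_inv_smul {p : F → ℝ} {x : F} (hp : DifferentiableAt ℝ p x)
    (hpx : p x ≠ 0) :
    gradient (fun y => Real.log (p y)) x = (p x)⁻¹ • gradient p x := by
  have h : HasFDerivAt (fun y => Real.log (p y)) ((p x)⁻¹ • fderiv ℝ p x) x :=
    (Real.hasDerivAt_log hpx).comp_hasFDerivAt x hp.hasFDerivAt
  rw [gradient, h.fderiv, map_smul, gradient]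

theorem norm_gradient_log_sub_sq_mul {p : F → ℝ} {x : F} (hp : DifferentiableAt ℝ p x)
    (hpx : p x ≠ 0) (v : F) :
    ‖gradient (fun y => Real.log (p y)) x - v‖ ^ 2 * p x
      = ‖gradient (fun y => Real.log (p y)) x‖ ^ 2 * p x - 2 * ⟪gradient p x, v⟫
        + ‖v‖ ^ 2 * p x := by
  have hinner : ⟪gradient (fun y => Real.log (p y)) x, v⟫ * p x = ⟪gradient p x, v⟫ := by
    rw [gradient_log_eq_inv_smul hp hpx, real_inner_smul_left, mul_right_comm,
      inv_mul_cancel₀ hpx, one_mul]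
  rw [norm_sub_sq_real, ← hinner]
  ring

end Gradient

section Euclidean

variable {n : ℕ}

theorem inner_gradient_eq_sum (f : EuclideanSpace ℝ (Fin n) → ℝ)
    (x v : EuclideanSpace ℝ (Fin n)) :
    ⟪gradient f x, v⟫ = ∑ d, fderiv ℝ f x (EuclideanSpace.single d 1) * v d := by
  conv_lhs => rw [inner_gradient_left, ← (EuclideanSpace.basisFun (Fin n) ℝ).sum_repr v]
  simp [mul_comm]

theorem diverg_eq_sum_fderiv_apply {G : EuclideanSpace ℝ (Fin n) → EuclideanSpace ℝ (Fin n)}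
    {x : EuclideanSpace ℝ (Fin n)} (hG : DifferentiableAt ℝ G x) :
    diverg G x = ∑ d, fderiv ℝ (fun y => G y d) x (EuclideanSpace.single d 1) := by
  refine Finset.sum_congr rfl fun d _ => ?_
  have hcoord := ((EuclideanSpace.proj d).hasFDerivAt.comp x hG.hasFDerivAt).fderiv
  rw [show (fun y => G y d) = EuclideanSpace.proj d ∘ G from rfl, hcoord]
  rfl

theorem continuous_diverg {G : EuclideanSpace ℝ (Fin n) → EuclideanSpace ℝ (Fin n)}
    (hG : ContDiff ℝ 1 G) : Continuous (diverg G) :=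
  continuous_finsetSum _ fun d _ => (EuclideanSpace.proj d).continuous.comp
    ((hG.continuous_fderiv one_ne_zero).clm_apply continuous_const)

theorem HasCompactSupport.diverg {G : EuclideanSpace ℝ (Fin n) → EuclideanSpace ℝ (Fin n)}
    (hG : HasCompactSupport G) : HasCompactSupport (diverg G) :=
  (hG.fderiv ℝ).mono fun x hx h0 => hx (by simp [_root_.diverg, h0])

theorem integral_inner_gradient_eq_neg_integral_diverg_mul
    {p : EuclideanSpace ℝ (Fin n) → ℝ} {G : EuclideanSpace ℝ (Fin n) → EuclideanSpace ℝ (Fin n)}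
    (hp : ContDiff ℝ 1 p) (hpint : Integrable p) (hG : ContDiff ℝ 1 G)
    (hGsupp : HasCompactSupport G) :
    ∫ x, ⟪gradient p x, G x⟫ = -∫ x, diverg G x * p x := by
  set e : Fin n → EuclideanSpace ℝ (Fin n) := fun d => EuclideanSpace.single d 1
  have hGd (d : Fin n) : ContDiff ℝ 1 (fun y => G y d) :=
    (EuclideanSpace.proj (𝕜 := ℝ) d).contDiff.comp hG
  have hGdsupp (d : Fin n) : HasCompactSupport (fun y => G y d) :=
    hGsupp.comp_left (g := fun v : EuclideanSpace ℝ (Fin n) => v d) rfl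
  have hG'dcont (d : Fin n) : Continuous (fun x => fderiv ℝ (fun y => G y d) x (e d)) :=
    ((hGd d).continuous_fderiv one_ne_zero).clm_apply continuous_const
  have hp'G (d : Fin n) : Integrable (fun x => fderiv ℝ p x (e d) * G x d) :=
    (((hp.continuous_fderiv one_ne_zero).clm_apply continuous_const).mul
      (hGd d).continuous).integrable_of_hasCompactSupport (hGdsupp d).mul_left
  have hpG' (d : Fin n) : Integrable (fun x => p x * fderiv ℝ (fun y => G y d) x (e d)) :=
    hpint.mul_of_top_left
      ((hG'dcont d).memLp_top_of_hasCompactSupport ((hGdsupp d).fderiv_apply ℝ (e d)) _)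
  have hpG (d : Fin n) : Integrable (fun x => p x * G x d) :=
    hpint.mul_of_top_left ((hGd d).continuous.memLp_top_of_hasCompactSupport (hGdsupp d) _)
  have hibp (d : Fin n) :
      ∫ x, fderiv ℝ p x (e d) * G x d = -∫ x, p x * fderiv ℝ (fun y => G y d) x (e d) := by
    rw [integral_mul_fderiv_eq_neg_fderiv_mul_of_integrable (hp'G d) (hpG' d) (hpG d)
      (fun x _ => hp.differentiable one_ne_zero x)
      (fun x _ => (hGd d).differentiable one_ne_zero x), neg_neg]
  calc ∫ x, ⟪gradient p x, G x⟫
      = ∑ d, ∫ x, fderiv ℝ p x (e d) * G x d := by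
        simp_rw [inner_gradient_eq_sum]
        exact integral_finsetSum _ fun d _ => hp'G d
    _ = -∑ d, ∫ x, p x * fderiv ℝ (fun y => G y d) x (e d) := by
        simp only [hibp, Finset.sum_neg_distrib]
    _ = -∫ x, diverg G x * p x := by
        rw [← integral_finsetSum _ fun d _ => hpG' d]
        simp_rw [diverg_eq_sum_fderiv_apply (hG.differentiable one_ne_zero _), Finset.sum_mul,
          mul_comm (p _)]
        rfl

end Euclidean

theorem fisher_divergence_eq_score_matching_general
    (n : ℕ)
    (p : EuclideanSpace ℝ (Fin n) → ℝ)
    (hp : ContDiff ℝ 1 p) (hppos : ∀ x, 0 < p x)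
    (hpint : Integrable p)
    (hscore : Integrable (fun x => ‖gradient (fun y => Real.log (p y)) x‖ ^ 2 * p x))
    (φ : EuclideanSpace ℝ (Fin n) → ℝ)
    (hφ : ContDiff ℝ 2 φ)
    (hφsupp : HasCompactSupport (fun y => gradient φ y)) :
    (1 / 2) * ∫ x, ‖gradient (fun y => Real.log (p y)) x - gradient φ x‖ ^ 2 * p x
      = (1 / 2) * (∫ x, ‖gradient (fun y => Real.log (p y)) x‖ ^ 2 * p x)
        + (1 / 2) * ∫ x, (‖gradient φ x‖ ^ 2 + 2 * laplacian φ x) * p x := by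
  have hG : ContDiff ℝ 1 (gradient φ) := hφ.gradient (by norm_num)
  have hinner_supp : HasCompactSupport (fun x => ⟪gradient p x, gradient φ x⟫) :=
    hφsupp.mono fun x hx h0 => hx (by simp_all)
  have hinner : Integrable (fun x => ⟪gradient p x, gradient φ x⟫) :=
    (hp.gradient (m := 0) (by norm_num)).continuous.inner hG.continuous
      |>.integrable_of_hasCompactSupport hinner_supp
  have hsq_supp : HasCompactSupport (fun x => ‖gradient φ x‖ ^ 2) :=
    hφsupp.comp_left (g := fun v => ‖v‖ ^ 2) (by simp)
  have hsq : Integrable (fun x => ‖gradient φ x‖ ^ 2 * p x) :=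
    hpint.mul_of_top_right
      ((hG.continuous.norm.pow 2).memLp_top_of_hasCompactSupport hsq_supp _)
  have hlap : Integrable (fun x => laplacian φ x * p x) :=
    hpint.mul_of_top_right ((continuous_diverg hG).memLp_top_of_hasCompactSupport
      hφsupp.diverg _)
  have hibp : ∫ x, ⟪gradient p x, gradient φ x⟫ = -∫ x, laplacian φ x * p x :=
    integral_inner_gradient_eq_neg_integral_diverg_mul hp hpint hG hφsupp
  have hexpand (x) := norm_gradient_log_sub_sq_mul (hp.differentiable one_ne_zero x)
    (hppos x).ne' (gradient φ x)
  have hscore_inner : Integrable (fun x =>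
      ‖gradient (fun y => Real.log (p y)) x‖ ^ 2 * p x - 2 * ⟪gradient p x, gradient φ x⟫) :=
    hscore.sub (hinner.const_mul 2)
  simp_rw [hexpand, add_mul, mul_assoc]
  rw [integral_add hscore_inner hsq, integral_sub hscore (hinner.const_mul 2),
    integral_add hsq (hlap.const_mul 2), integral_const_mul, integral_const_mul, hibp]
  ring

/-- **Fisher divergence = ½·(score-matching objective) + constant.** For a continuously
differentiable, everywhere positive probability density `p` with
`∫ ‖∇log p‖² p dx < ∞`, and a twice continuously differentiable `φ` whose gradient has
compact support,
`(1/2)∫‖∇log p − ∇φ‖² p dx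
  = (1/2)∫‖∇log p‖² p dx + (1/2)∫(‖∇φ‖² + 2Δφ) p dx`. -/
theorem fisher_divergence_eq_score_matching
    (n : ℕ)
    (p : EuclideanSpace ℝ (Fin n) → ℝ)
    (hp : ContDiff ℝ 1 p) (hppos : ∀ x, 0 < p x)
    (hpint : Integrable p) (hpone : ∫ x, p x = 1)
    (hscore : Integrable (fun x => ‖gradient (fun y => Real.log (p y)) x‖ ^ 2 * p x))
    (φ : EuclideanSpace ℝ (Fin n) → ℝ)
    (hφ : ContDiff ℝ 2 φ)
    (hφsupp : HasCompactSupport (fun y => gradient φ y)) :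
    (1 / 2) * ∫ x, ‖gradient (fun y => Real.log (p y)) x - gradient φ x‖ ^ 2 * p x
      = (1 / 2) * (∫ x, ‖gradient (fun y => Real.log (p y)) x‖ ^ 2 * p x)
        + (1 / 2) * ∫ x, (‖gradient φ x‖ ^ 2 + 2 * laplacian φ x) * p x :=
  fisher_divergence_eq_score_matching_general n p hp hppos hpint hscore φ hφ hφsupp
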